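/- arXiv:1403.6076 — 2 statements merged into one kernel-verified Lean document; each statement's English description precedes it below -/
import Mathlib

section
/- Let u₀ > 0 and α > 0 be real numbers, and let u : [0,∞) → [0,∞) be a continuous function such that u(t) ≤ u₀ + α · ∫₀ᵗ u(s)² ds for all t ≥ 0. Then u(t) ≤ u₀ / (1 − α·u₀·t) for all t with 0 ≤ t < 1/(α·u₀). -/
/-!
The majorant `v t = u₀ + α ∫₀ᵗ u²` satisfies `v' = α u² ≤ α v²`, i.e. `(1 / v)' ≥ -α`.
Hence `1 / v t ≥ 1 / u₀ - α t`, which is positive before the blow-up time `1 / (α u₀)`;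
inverting gives `u t ≤ v t ≤ u₀ / (1 - α u₀ t)`.
-/

open Set

section Primitive

variable {f : ℝ → ℝ} {a b : ℝ}

theorem continuousOn_integral_of_continuousOn_Icc (hf : ContinuousOn f (Icc a b))
    (hab : a ≤ b) : ContinuousOn (fun x => ∫ s in a..x, f s) (Icc a b) := by
  simpa only [uIcc_of_le hab] using intervalIntegral.continuousOn_primitive_interval
    (hf.integrableOn_Icc (μ := MeasureTheory.volume).mono_set (uIcc_of_le hab).le)

theorem hasDerivAt_integral_of_continuousOn_Icc {t : ℝ} (hf : ContinuousOn f (Icc a b))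
    (ht : t ∈ Ioo a b) : HasDerivAt (fun x => ∫ s in a..x, f s) (f t) t :=
  intervalIntegral.integral_hasDerivAt_right
    (hf.mono (by rw [uIcc_of_le ht.1.le]; exact Icc_subset_Icc_right ht.2.le)).intervalIntegrable
    ((hf.mono Ioo_subset_Icc_self).stronglyMeasurableAtFilter isOpen_Ioo t ht)
    (hf.continuousAt (Icc_mem_nhds ht.1 ht.2))

end Primitive

section RiccatiComparison

variable {v v' : ℝ → ℝ} {α a b : ℝ}

theorem monotoneOn_inv_add_mul_of_deriv_le_mul_sq (hcont : ContinuousOn v (Icc a b))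
    (hpos : ∀ t ∈ Icc a b, 0 < v t) (hderiv : ∀ t ∈ Ioo a b, HasDerivAt v (v' t) t)
    (hle : ∀ t ∈ Ioo a b, v' t ≤ α * v t ^ 2) :
    MonotoneOn (fun t => (v t)⁻¹ + α * t) (Icc a b) := by
  have hpos' : ∀ t ∈ Ioo a b, 0 < v t := fun t ht => hpos t (Ioo_subset_Icc_self ht)
  refine monotoneOn_of_hasDerivWithinAt_nonneg (f' := fun t => -v' t / v t ^ 2 + α * 1)
    (convex_Icc a b)
    ((hcont.inv₀ fun t ht => (hpos t ht).ne').add (continuousOn_const.mul continuousOn_id))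
    (fun t ht => ?_) (fun t ht => ?_)
  · rw [interior_Icc] at ht
    exact (((hderiv t ht).inv (hpos' t ht).ne').add
      ((hasDerivAt_id t).const_mul α)).hasDerivWithinAt
  · rw [interior_Icc] at ht
    rw [mul_one, neg_div, le_neg_add_iff_le, div_le_iff₀ (pow_pos (hpos' t ht) 2)]
    exact hle t ht

theorem le_div_one_sub_mul_of_deriv_le_mul_sq (hcont : ContinuousOn v (Icc a b))
    (hpos : ∀ t ∈ Icc a b, 0 < v t) (hderiv : ∀ t ∈ Ioo a b, HasDerivAt v (v' t) t)
    (hle : ∀ t ∈ Ioo a b, v' t ≤ α * v t ^ 2) (hab : a ≤ b)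
    (hblowup : α * v a * (b - a) < 1) : v b ≤ v a / (1 - α * v a * (b - a)) := by
  have hva := hpos a (left_mem_Icc.2 hab)
  have hmono := monotoneOn_inv_add_mul_of_deriv_le_mul_sq hcont hpos hderiv hle
    (left_mem_Icc.2 hab) (right_mem_Icc.2 hab) hab
  have hinv : (1 - α * v a * (b - a)) / v a ≤ (v b)⁻¹ := by
    rw [sub_div, one_div, mul_comm α, mul_assoc, mul_div_cancel_left₀ _ hva.ne']
    simp only at hmono
    linarith
  simpa only [inv_inv, inv_div] using inv_anti₀ (div_pos (sub_pos.2 hblowup) hva) hinv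

end RiccatiComparison

/-- Grönwall–Bellman–Bihari integral inequality (Lemma 5.3). -/
theorem bihari_inequality (u₀ α : ℝ) (hu₀ : 0 < u₀) (hα : 0 < α)
    (u : ℝ → ℝ) (hcont : ContinuousOn u (Set.Ici 0))
    (hnonneg : ∀ t, 0 ≤ t → 0 ≤ u t)
    (hineq : ∀ t, 0 ≤ t → u t ≤ u₀ + α * ∫ s in (0:ℝ)..t, (u s) ^ 2) :
    ∀ t, 0 ≤ t → t < 1 / (α * u₀) → u t ≤ u₀ / (1 - α * u₀ * t) := by
  intro T hT hblowup
  set v : ℝ → ℝ := fun t => u₀ + α * ∫ s in (0:ℝ)..t, (u s) ^ 2 with hv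
  have hsq : ContinuousOn (fun s => u s ^ 2) (Icc 0 T) := (hcont.mono Icc_subset_Ici_self).pow 2
  have hv_cont : ContinuousOn v (Icc 0 T) := continuousOn_const.add
    (continuousOn_const.mul (continuousOn_integral_of_continuousOn_Icc hsq hT))
  have hv_pos : ∀ t ∈ Icc 0 T, 0 < v t := fun t ht => by
    have := mul_nonneg hα.le (intervalIntegral.integral_nonneg (μ := MeasureTheory.volume) ht.1
      fun s _ => sq_nonneg (u s))
    simp only [hv]; linarith
  have hv_deriv : ∀ t ∈ Ioo 0 T, HasDerivAt v (α * u t ^ 2) t := fun t ht =>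
    ((hasDerivAt_integral_of_continuousOn_Icc hsq ht).const_mul α).const_add u₀
  have hv_le : ∀ t ∈ Ioo 0 T, α * u t ^ 2 ≤ α * v t ^ 2 := fun t ht => by
    gcongr
    exacts [hnonneg t ht.1.le, hineq t ht.1.le]
  have hv0 : v 0 = u₀ := by simp [hv]
  have hbefore_blowup : α * v 0 * (T - 0) < 1 := by
    rwa [hv0, sub_zero, ← lt_div_iff₀' (mul_pos hα hu₀)]
  calc u T ≤ v T := hineq T hT
    _ ≤ u₀ / (1 - α * u₀ * T) := by
      simpa only [hv0, sub_zero] using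
        le_div_one_sub_mul_of_deriv_le_mul_sq hv_cont hv_pos hv_deriv hv_le hT hbefore_blowup
end

section
/- Let n ≥ 2, r ≥ 1, and let U ⊆ ℂⁿ be an open set contained in {λ ∈ ℂⁿ : λᵢ ≠ λⱼ for all i ≠ j}. Let A₁, …, Aₙ : U → M_r(ℂ) be functions admitting partial derivatives in each coordinate at every point of U, satisfying the Schlesinger equations on U: ∂_{λⱼ}Aᵢ = [Aᵢ, Aⱼ]/(λᵢ − λⱼ) for all i ≠ j, and ∂_{λᵢ}Aᵢ = −Σ_{j≠i} [Aᵢ, Aⱼ]/(λᵢ − λⱼ) for each i. Define ω_k : U → ℂ by ω_k(λ) = Σ_{i≠k} Tr(Aᵢ(λ)A_k(λ))/(λ_k − λᵢ). Then the 1-form ω = Σ_k ω_k dλ_k is closed: ∂_{λⱼ}ω_k(λ) = ∂_{λ_k}ω_j(λ) for all j, k and all λ ∈ U. -/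
/-!
Differentiate `ω_k` along `e_j` and substitute the Schlesinger equations. For `j ≠ k`, the
ad-invariance `Tr(X [Y, Z]) = Tr([X, Y] Z)` of the trace form turns every term cubic in the `A_i`
into a multiple of `c_i = Tr(A_i [A_j, A_k])`, `i ∉ {j, k}`. The two such terms coming from the
summand `i` of `ω_k` combine, by the partial-fraction identity
`1/((λ_k - λ_i)(λ_i - λ_j)) - 1/((λ_k - λ_i)(λ_k - λ_j)) = 1/((λ_i - λ_j)(λ_k - λ_j))`,
into the exact opposite of the multiple of `c_i` contributed through `∂_j A_j` by the summand
`i = j`. Only `Tr(A_j A_k)/(λ_j - λ_k)²` survives, and it is symmetric in `j` and `k`.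
-/

open Matrix Finset

attribute [local instance] Matrix.normedAddCommGroup Matrix.normedSpace

/-- The Jimbo–Miwa–Ueno 1-form coefficient
`ω_k(λ) = Σ_{i ≠ k} Tr(Aᵢ(λ)A_k(λ))/(λ_k − λᵢ)`. -/
noncomputable def jmuOmega (n r : ℕ)
    (A : Fin n → (Fin n → ℂ) → Matrix (Fin r) (Fin r) ℂ)
    (k : Fin n) (lam : Fin n → ℂ) : ℂ :=
  ∑ i ∈ univ.filter (· ≠ k), (lam k - lam i)⁻¹ * (A i lam * A k lam).trace

theorem Matrix.hasDerivAt_trace_mul {𝕜 m : Type*} [NontriviallyNormedField 𝕜] [CompleteSpace 𝕜]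
    [Fintype m] {F G : 𝕜 → Matrix m m 𝕜} {F' G' : Matrix m m 𝕜} {x : 𝕜}
    (hF : HasDerivAt F F' x) (hG : HasDerivAt G G' x) :
    HasDerivAt (fun t => (F t * G t).trace) ((F' * G x).trace + (F x * G').trace) x := by
  let B := ((LinearMap.mul 𝕜 (Matrix m m 𝕜)).compr₂
    (Matrix.traceLinearMap m 𝕜 𝕜)).toContinuousBilinearMap
  rw [add_comm]
  exact B.hasDerivAt_of_bilinear (fun _ => hF) (fun _ => hG)

theorem hasDerivAt_inv_sub_apply_add_smul {ι 𝕜 : Type*} [Fintype ι] [NontriviallyNormedField 𝕜]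
    (x e : ι → 𝕜) {i k : ι} (hki : x k ≠ x i) :
    HasDerivAt (fun t : 𝕜 => ((x + t • e) k - (x + t • e) i)⁻¹)
      (-(e k - e i) / (x k - x i) ^ 2) 0 := by
  have hline : HasDerivAt (fun t : 𝕜 => x + t • e) e 0 := by
    simpa using ((hasDerivAt_id (0 : 𝕜)).smul_const e).const_add x
  have hdiff := (hasDerivAt_pi.1 hline k).sub (hasDerivAt_pi.1 hline i)
  simpa using hdiff.fun_inv (by simpa [sub_eq_zero] using hki)

section Algebra

variable {m : Type*} [Fintype m] {R : Type*} [CommRing R] (X Y : Matrix m m R)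

theorem Matrix.trace_mul_commutator_self : (X * (Y * X - X * Y)).trace = 0 := by
  rw [Matrix.mul_sub, trace_sub, ← Matrix.mul_assoc, ← Matrix.mul_assoc, trace_mul_cycle, sub_self]

theorem Matrix.trace_mul_commutator (Z : Matrix m m R) :
    (X * (Y * Z - Z * Y)).trace = ((X * Y - Y * X) * Z).trace := by
  rw [Matrix.mul_sub, Matrix.sub_mul, trace_sub, trace_sub, ← Matrix.mul_assoc,
    ← Matrix.mul_assoc, trace_mul_cycle X Z Y]

end Algebra

section Schlesinger

variable {ι : Type*} [Fintype ι] [DecidableEq ι] {m : Type*} [Fintype m] {𝕜 : Type*} [Field 𝕜]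

/-- `schlesingerRHS x a i j` is the value of `∂_{λ_j} A_i` prescribed by the Schlesinger
equations. -/
noncomputable def schlesingerRHS (x : ι → 𝕜) (a : ι → Matrix m m 𝕜) (i j : ι) : Matrix m m 𝕜 :=
  if i = j then -∑ l ∈ univ.filter (· ≠ i), (x i - x l)⁻¹ • (a i * a l - a l * a i)
  else (x i - x j)⁻¹ • (a i * a j - a j * a i)

noncomputable def jmuOmegaDerivAlong (x e : ι → 𝕜) (a a' : ι → Matrix m m 𝕜) (k : ι) : 𝕜 :=
  ∑ i ∈ univ.filter (· ≠ k),
    (-(e k - e i) / (x k - x i) ^ 2 * (a i * a k).trace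
      + (x k - x i)⁻¹ * ((a' i * a k).trace + (a i * a' k).trace))

theorem trace_schlesingerRHS_self_mul (x : ι → 𝕜) (a : ι → Matrix m m 𝕜) {j k : ι} (hjk : j ≠ k) :
    (schlesingerRHS x a j j * a k).trace
      = ∑ l ∈ (univ.erase k).erase j, (x j - x l)⁻¹ * (a l * (a j * a k - a k * a j)).trace := by
  have hsum : (schlesingerRHS x a j j * a k).trace
      = ∑ l ∈ univ.erase j, (x j - x l)⁻¹ * (a l * (a j * a k - a k * a j)).trace := by
    rw [schlesingerRHS, if_pos rfl, filter_ne', Matrix.neg_mul, Matrix.sum_mul, trace_neg,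
      trace_sum, ← sum_neg_distrib]
    refine sum_congr rfl fun l _ => ?_
    rw [smul_mul_assoc, trace_smul, smul_eq_mul, ← mul_neg, ← trace_neg, ← Matrix.neg_mul,
      neg_sub, ← trace_mul_commutator]
  rw [hsum, ← add_sum_erase _ _ (mem_erase.2 ⟨hjk.symm, mem_univ k⟩), erase_right_comm,
    trace_mul_commutator_self, mul_zero, zero_add]

theorem jmuOmegaDerivAlong_schlesingerRHS_of_ne {x : ι → 𝕜} (hx : Function.Injective x)
    (a : ι → Matrix m m 𝕜) {j k : ι} (hjk : j ≠ k) :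
    jmuOmegaDerivAlong x (Pi.single j 1) a (schlesingerRHS x a · j) k
      = ((x k - x j) ^ 2)⁻¹ * (a j * a k).trace := by
  have hsub : ∀ {i l : ι}, i ≠ l → x i - x l ≠ 0 := fun h => sub_ne_zero.2 (hx.ne h)
  have hS_kj : (a j * schlesingerRHS x a k j).trace = 0 := by
    rw [schlesingerRHS, if_neg hjk.symm, mul_smul_comm, trace_smul, trace_mul_commutator_self,
      smul_zero]
  have hterm : ∀ i ∈ (univ.erase k).erase j,
      -((Pi.single j 1 : ι → 𝕜) k - (Pi.single j 1 : ι → 𝕜) i) / (x k - x i) ^ 2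
          * (a i * a k).trace
        + (x k - x i)⁻¹ * ((schlesingerRHS x a i j * a k).trace
          + (a i * schlesingerRHS x a k j).trace)
      = -((x k - x j)⁻¹ * ((x j - x i)⁻¹ * (a i * (a j * a k - a k * a j)).trace)) := by
    intro i hi
    obtain ⟨hij, hik⟩ : i ≠ j ∧ i ≠ k := by simpa using hi
    rw [schlesingerRHS, if_neg hij, schlesingerRHS, if_neg hjk.symm, smul_mul_assoc,
      mul_smul_comm, trace_smul, trace_smul, ← trace_mul_commutator, ← neg_sub (a j * a k),
      Matrix.mul_neg, trace_neg, Pi.single_eq_of_ne hjk.symm, Pi.single_eq_of_ne hij,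
      smul_eq_mul, smul_eq_mul]
    have := hsub hik.symm; have := hsub hij; have := hsub hij.symm; have := hsub hjk.symm
    field_simp
    ring
  rw [jmuOmegaDerivAlong, filter_ne', ← add_sum_erase _ _ (mem_erase.2 ⟨hjk, mem_univ j⟩),
    sum_congr rfl hterm, sum_neg_distrib, ← mul_sum, trace_schlesingerRHS_self_mul x a hjk, hS_kj,
    Pi.single_eq_same, Pi.single_eq_of_ne hjk.symm]
  ring

theorem jmuOmegaDerivAlong_schlesingerRHS_comm {x : ι → 𝕜} (hx : Function.Injective x)
    (a : ι → Matrix m m 𝕜) (j k : ι) :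
    jmuOmegaDerivAlong x (Pi.single j 1) a (schlesingerRHS x a · j) k
      = jmuOmegaDerivAlong x (Pi.single k 1) a (schlesingerRHS x a · k) j := by
  rcases eq_or_ne j k with rfl | hjk
  · rfl
  rw [jmuOmegaDerivAlong_schlesingerRHS_of_ne hx a hjk,
    jmuOmegaDerivAlong_schlesingerRHS_of_ne hx a hjk.symm, trace_mul_comm, ← neg_sub (x j),
    neg_sq]

end Schlesinger

theorem hasDerivAt_of_schlesinger {ι m 𝕜 : Type*} [Fintype ι] [DecidableEq ι] [Fintype m]
    [NontriviallyNormedField 𝕜] {A : ι → (ι → 𝕜) → Matrix m m 𝕜} {lam : ι → 𝕜}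
    (hoff : ∀ i j : ι, i ≠ j →
      HasDerivAt (fun t : 𝕜 => A i (lam + t • (Pi.single j 1 : ι → 𝕜)))
        ((lam i - lam j)⁻¹ • (A i lam * A j lam - A j lam * A i lam)) 0)
    (hdiag : ∀ i : ι,
      HasDerivAt (fun t : 𝕜 => A i (lam + t • (Pi.single i 1 : ι → 𝕜)))
        (-(∑ j ∈ univ.filter (· ≠ i),
            (lam i - lam j)⁻¹ • (A i lam * A j lam - A j lam * A i lam))) 0)
    (i j : ι) :
    HasDerivAt (fun t : 𝕜 => A i (lam + t • (Pi.single j 1 : ι → 𝕜)))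
      (schlesingerRHS lam (A · lam) i j) 0 := by
  by_cases hij : i = j
  · subst hij
    rw [schlesingerRHS, if_pos rfl]
    exact hdiag i
  · rw [schlesingerRHS, if_neg hij]
    exact hoff i j hij

theorem hasDerivAt_jmuOmega {n r : ℕ} {A : Fin n → (Fin n → ℂ) → Matrix (Fin r) (Fin r) ℂ}
    {lam e : Fin n → ℂ} (hlam : Function.Injective lam) {A' : Fin n → Matrix (Fin r) (Fin r) ℂ}
    (hA : ∀ i, HasDerivAt (fun t : ℂ => A i (lam + t • e)) (A' i) 0) (k : Fin n) :
    HasDerivAt (fun t : ℂ => jmuOmega n r A k (lam + t • e))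
      (jmuOmegaDerivAlong lam e (A · lam) A' k) 0 := by
  refine HasDerivAt.fun_sum fun i hi => ?_
  have hik : i ≠ k := (mem_filter.1 hi).2
  simpa using (hasDerivAt_inv_sub_apply_add_smul lam e (hlam.ne hik.symm)).fun_mul
    (hasDerivAt_trace_mul (hA i) (hA k))

theorem jmu_form_closed_general (n r : ℕ)
    (U : Set (Fin n → ℂ))
    (hUsub : U ⊆ {lam : Fin n → ℂ | ∀ i j, i ≠ j → lam i ≠ lam j})
    (A : Fin n → (Fin n → ℂ) → Matrix (Fin r) (Fin r) ℂ)
    (hoff : ∀ lam ∈ U, ∀ i j : Fin n, i ≠ j →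
      HasDerivAt (fun t : ℂ => A i (lam + t • (Pi.single j 1 : Fin n → ℂ)))
        ((lam i - lam j)⁻¹ • (A i lam * A j lam - A j lam * A i lam)) 0)
    (hdiag : ∀ lam ∈ U, ∀ i : Fin n,
      HasDerivAt (fun t : ℂ => A i (lam + t • (Pi.single i 1 : Fin n → ℂ)))
        (-(∑ j ∈ univ.filter (· ≠ i),
            (lam i - lam j)⁻¹ • (A i lam * A j lam - A j lam * A i lam))) 0) :
    ∀ lam ∈ U, ∀ j k : Fin n, ∃ D : ℂ,
      HasDerivAt
        (fun t : ℂ => jmuOmega n r A k (lam + t • (Pi.single j 1 : Fin n → ℂ))) D 0 ∧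
      HasDerivAt
        (fun t : ℂ => jmuOmega n r A j (lam + t • (Pi.single k 1 : Fin n → ℂ))) D 0 := by
  intro lam hlam j k
  have hinj : Function.Injective lam := fun i l h => by_contra fun hil => hUsub hlam i l hil h
  have hA (j : Fin n) :=
    hasDerivAt_of_schlesinger (hoff lam hlam) (hdiag lam hlam) (j := j)
  refine ⟨_, hasDerivAt_jmuOmega hinj (hA j) k, ?_⟩
  rw [jmuOmegaDerivAlong_schlesingerRHS_comm hinj]
  exact hasDerivAt_jmuOmega hinj (hA k) j

/-- Closedness of the Jimbo–Miwa–Ueno form: if the `Aᵢ` satisfy the Schlesinger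
equations on an open set `U` avoiding the diagonals, then
`∂_{λⱼ} ω_k = ∂_{λ_k} ω_j` at every point of `U` (in particular both partial
derivatives exist). Partial derivatives are taken as complex derivatives at
`t = 0` of `t ↦ F(λ + t·eⱼ)`. -/
theorem jmu_form_closed (n r : ℕ) (hn : 2 ≤ n) (hr : 1 ≤ r)
    (U : Set (Fin n → ℂ)) (hU : IsOpen U)
    (hUsub : U ⊆ {lam : Fin n → ℂ | ∀ i j, i ≠ j → lam i ≠ lam j})
    (A : Fin n → (Fin n → ℂ) → Matrix (Fin r) (Fin r) ℂ)
    (hoff : ∀ lam ∈ U, ∀ i j : Fin n, i ≠ j →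
      HasDerivAt (fun t : ℂ => A i (lam + t • (Pi.single j 1 : Fin n → ℂ)))
        ((lam i - lam j)⁻¹ • (A i lam * A j lam - A j lam * A i lam)) 0)
    (hdiag : ∀ lam ∈ U, ∀ i : Fin n,
      HasDerivAt (fun t : ℂ => A i (lam + t • (Pi.single i 1 : Fin n → ℂ)))
        (-(∑ j ∈ univ.filter (· ≠ i),
            (lam i - lam j)⁻¹ • (A i lam * A j lam - A j lam * A i lam))) 0) :
    ∀ lam ∈ U, ∀ j k : Fin n, ∃ D : ℂ,
      HasDerivAt
        (fun t : ℂ => jmuOmega n r A k (lam + t • (Pi.single j 1 : Fin n → ℂ))) D 0 ∧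
      HasDerivAt
        (fun t : ℂ => jmuOmega n r A j (lam + t • (Pi.single k 1 : Fin n → ℂ))) D 0 :=
  jmu_form_closed_general n r U hUsub A hoff hdiag
end
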